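/- Let X be a finite polygonal complex, μ₂ a probability distribution on the unoriented polygons P(X), and L the maximal length of a polygon of X. For each unoriented edge [e] let w([e]) = E_{[π]∼μ₂}[OC(e ≺ π)], where OC(e ≺ π) is the number of indices j with [e_j] = [e] in π = e₁…e_ℓ (this is independent of the chosen orientation of e and of π), and let μ₁([e]) = w([e]) / Σ_{[e']} w([e']). Fix for each unoriented polygon [π] a representative oriented polygon π. Then for every n ≤ N, every 1-cochain α with Sym(n) coefficients and every 1-cochain φ with Sym(N) coefficients: E_{[π]∼μ₂}[d_h(δα(π), δφ(π))] ≤ E_{[π]∼μ₂}[ℓ(π)] · E_{[e]∼μ₁}[d_h(α(e), φ(e))] ≤ L · E_{[e]∼μ₁}[d_h(α(e), φ(e))]. -/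

import Mathlib

open scoped Classical

noncomputable section

namespace StabilityPaper

/-! ## Graphs à la Bass–Serre -/

structure BSGraph (V E : Type) where
  ι : E → V
  τ : E → V
  bar : E → E
  bar_invol : ∀ e, bar (bar e) = e
  τ_bar : ∀ e, τ (bar e) = ι e
  bar_ne : ∀ e, bar e ≠ e

namespace BSGraph

variable {V E : Type}

/-- A path is a list of directed edges, consecutive ones being composable. -/
def IsPath (G : BSGraph V E) (p : List E) : Prop :=
  p.Chain' fun e f => G.τ e = G.ι f

def pathStart (G : BSGraph V E) (p : List E) : Option V := p.head?.map G.ι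

def pathEnd (G : BSGraph V E) (p : List E) : Option V := p.getLast?.map G.τ

def IsClosedPath (G : BSGraph V E) (p : List E) : Prop :=
  p ≠ [] ∧ G.IsPath p ∧ G.pathStart p = G.pathEnd p

def NonBacktracking (G : BSGraph V E) (p : List E) : Prop :=
  p.Chain' fun e f => f ≠ G.bar e

/-- The reverse orientation of a path. -/
def inv (G : BSGraph V E) (p : List E) : List E := (p.map G.bar).reverse

/-- Cyclically reduced: all cyclic shifts are non-backtracking. -/
def CyclicallyReduced (G : BSGraph V E) (p : List E) : Prop :=
  ∀ k, G.NonBacktracking (p.rotate k)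

def Connected (G : BSGraph V E) : Prop :=
  ∀ x y : V, Relation.ReflTransGen (fun a b => ∃ e, G.ι e = a ∧ G.τ e = b) x y

/-- All shifts and reversals of a path: out of these one obtains the unoriented polygons. -/
def orbitFinset [DecidableEq E] (G : BSGraph V E) (p : List E) : Finset (List E) :=
  ((Finset.range p.length).image fun k => p.rotate k) ∪
    ((Finset.range p.length).image fun k => (G.inv p).rotate k)


variable (G : BSGraph V E)

lemma length_inv (l : List E) : (G.inv l).length = l.length := by
  simp [BSGraph.inv]

lemma inv_inv (l : List E) : G.inv (G.inv l) = l := by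
  unfold BSGraph.inv
  rw [List.map_reverse, List.reverse_reverse, List.map_map]
  simp [Function.comp_def, G.bar_invol]

lemma inv_rotate (l : List E) (k : ℕ) :
    G.inv (l.rotate k) = (G.inv l).rotate (l.length - k % l.length) := by
  unfold BSGraph.inv
  rw [List.map_rotate, List.reverse_rotate]
  simp

lemma rotate_inv (l : List E) (k : ℕ) :
    (G.inv l).rotate k = G.inv (l.rotate (l.length - k % l.length)) := by
  unfold BSGraph.inv
  rw [List.map_rotate, List.rotate_reverse]
  simp

lemma nonback_inv {q : List E} (h : G.NonBacktracking q) : G.NonBacktracking (G.inv q) := by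
  unfold BSGraph.NonBacktracking BSGraph.inv at *
  change List.IsChain _ (List.map G.bar q).reverse
  change List.IsChain _ q at h
  rw [List.isChain_reverse, List.isChain_map]
  refine h.imp ?_
  intro a b hab
  show G.bar a ≠ G.bar (G.bar b)
  rw [G.bar_invol]
  exact Ne.symm hab

lemma cyclRed_inv {w : List E} (h : G.CyclicallyReduced w) :
    G.CyclicallyReduced (G.inv w) := by
  intro k
  rw [G.rotate_inv]
  exact G.nonback_inv (h _)

variable [DecidableEq E]

lemma rotate_mem_orbitFinset {p : List E} (hp : p ≠ []) (j : ℕ) :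
    p.rotate j ∈ G.orbitFinset p := by
  apply Finset.mem_union_left
  refine Finset.mem_image.2 ⟨j % p.length, Finset.mem_range.2 (Nat.mod_lt _ (List.length_pos_iff.2 hp)), ?_⟩
  rw [List.rotate_mod]

lemma inv_rotate_mem_orbitFinset {p : List E} (hp : p ≠ []) (j : ℕ) :
    (G.inv p).rotate j ∈ G.orbitFinset p := by
  apply Finset.mem_union_right
  refine Finset.mem_image.2 ⟨j % p.length, Finset.mem_range.2 (Nat.mod_lt _ (List.length_pos_iff.2 hp)), ?_⟩
  conv_rhs => rw [← List.rotate_mod, G.length_inv]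

lemma mem_orbitFinset {p q : List E} (hq : q ∈ G.orbitFinset p) :
    ∃ j, q = p.rotate j ∨ q = (G.inv p).rotate j := by
  rcases Finset.mem_union.1 hq with h | h <;>
    · obtain ⟨j, _, rfl⟩ := Finset.mem_image.1 h
      exact ⟨j, by tauto⟩

lemma orbit_rotate {p q : List E} (hp : p ≠ []) (hq : q ∈ G.orbitFinset p) (k : ℕ) :
    q.rotate k ∈ G.orbitFinset p := by
  obtain ⟨j, rfl | rfl⟩ := G.mem_orbitFinset hq <;>
    rw [List.rotate_rotate]
  · exact G.rotate_mem_orbitFinset hp _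
  · exact G.inv_rotate_mem_orbitFinset hp _

lemma orbit_inv {p q : List E} (hp : p ≠ []) (hq : q ∈ G.orbitFinset p) :
    G.inv q ∈ G.orbitFinset p := by
  obtain ⟨j, rfl | rfl⟩ := G.mem_orbitFinset hq
  · rw [G.inv_rotate]
    exact G.inv_rotate_mem_orbitFinset hp _
  · rw [G.inv_rotate, G.inv_inv, G.length_inv]
    exact G.rotate_mem_orbitFinset hp _

lemma orbit_cyclRed {p q : List E} (hp : G.CyclicallyReduced p) (hq : q ∈ G.orbitFinset p) :
    G.CyclicallyReduced q := by
  obtain ⟨j, rfl | rfl⟩ := G.mem_orbitFinset hq <;> intro k <;> rw [List.rotate_rotate]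
  · exact hp _
  · exact G.cyclRed_inv hp _

lemma orbit_length {p q : List E} (hq : q ∈ G.orbitFinset p) : q.length = p.length := by
  obtain ⟨j, rfl | rfl⟩ := G.mem_orbitFinset hq <;> simp [G.length_inv]


end BSGraph

/-! ## Polygonal complexes -/

structure PolyComplex (V E : Type) [Fintype V] [Fintype E] [DecidableEq V] [DecidableEq E]
    extends BSGraph V E where
  P : Finset (List E)
  P_closed : ∀ p ∈ P, toBSGraph.IsClosedPath p
  P_cyclRed : ∀ p ∈ P, toBSGraph.CyclicallyReduced p
  P_rotate : ∀ p ∈ P, ∀ k, p.rotate k ∈ P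
  P_inv : ∀ p ∈ P, toBSGraph.inv p ∈ P

variable {V E : Type} [Fintype V] [Fintype E] [DecidableEq V] [DecidableEq E]

/-- Average of a real valued function over a finset (uniform expectation). -/
def eavg {β : Type*} (s : Finset β) (f : β → ℝ) : ℝ := (∑ x ∈ s, f x) / s.card

/-- The probability that a uniformly random point is moved by the permutation `σ`;
this is the normalized Hamming distance from `σ` to the identity. -/
def moveProb {n : ℕ} (σ : Equiv.Perm (Fin n)) : ℝ :=
  ((Finset.univ.filter fun i : Fin n => σ i ≠ i).card : ℝ) / n

/-- The normalized Hamming distance with errors between `σ ∈ Sym(n)` and `τ ∈ Sym(N)`,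
`n ≤ N`. -/
def dH {n N : ℕ} (h : n ≤ N) (σ : Equiv.Perm (Fin n)) (τ : Equiv.Perm (Fin N)) : ℝ :=
  1 - ((Finset.univ.filter fun i : Fin n =>
    ((σ i : ℕ) = ((τ (Fin.castLE h i) : Fin N) : ℕ))).card : ℝ) / N

namespace PolyComplex

variable (X : PolyComplex V E)

/-- A `1`-cochain with `Sym(n)` coefficients: an antisymmetric assignment of permutations to
directed edges. -/
def IsCochain {n : ℕ} (α : E → Equiv.Perm (Fin n)) : Prop :=
  ∀ e, α (X.bar e) = (α e)⁻¹

end PolyComplex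

/-- Evaluation of a `1`-cochain along a path. -/
def evalPath {n : ℕ} (α : E → Equiv.Perm (Fin n)) (p : List E) : Equiv.Perm (Fin n) :=
  (p.map α).prod

namespace PolyComplex

variable (X : PolyComplex V E)

/-- A `1`-cocycle: a `1`-cochain whose coboundary is trivial on every polygon. -/
def IsCocycle {n : ℕ} (α : E → Equiv.Perm (Fin n)) : Prop :=
  X.IsCochain α ∧ ∀ p ∈ X.P, evalPath α p = 1

/-- The set of orientations (shifts and reversals) of a polygon, i.e. the unoriented polygon
determined by `p`. -/
def orientations (p : List E) : Finset (List E) :=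
  X.P.filter fun q => ∃ k, q = p.rotate k ∨ q = (X.toBSGraph.inv p).rotate k

/-- The unoriented polygons of `X`. -/
def polygonOrbits : Finset (Finset (List E)) := X.P.image fun p => X.orientations p

/-- The unoriented edges of `X`. -/
def edgeOrbits : Finset (Finset E) := Finset.univ.image fun e => ({e, X.bar e} : Finset E)

/-- The local defect `‖δα‖` of a `1`-cochain: the probability that a uniformly random point is
moved by `δα(π)`, for a uniformly random unoriented polygon `[π]` and a uniformly random
orientation `π` of it. -/
def localDefect {n : ℕ} (α : E → Equiv.Perm (Fin n)) : ℝ :=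
  eavg X.polygonOrbits fun O => eavg O fun p => moveProb (evalPath α p)

/-- The distance between two `1`-cochains: expected normalized Hamming distance (with errors)
over a uniformly random unoriented edge. -/
def cochainDist {n N : ℕ} (h : n ≤ N) (α : E → Equiv.Perm (Fin n))
    (φ : E → Equiv.Perm (Fin N)) : ℝ :=
  eavg X.edgeOrbits fun O => eavg O fun e => dH h (α e) (φ e)

/-- The global defect of a `1`-cochain: its distance to the nearest `1`-cocycle (with possibly
larger permutation coefficients). -/
def DefCocyc {n : ℕ} (α : E → Equiv.Perm (Fin n)) : ℝ :=
  sInf { d : ℝ | ∃ (N : ℕ) (h : n ≤ N) (φ : E → Equiv.Perm (Fin N)),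
    X.IsCocycle φ ∧ d = X.cochainDist h α φ }

/-- `ρ`-cocycle stability of the polygonal complex `X`. -/
def CocycleStable (ρ : ℝ → ℝ) : Prop :=
  ∀ (n : ℕ), 1 ≤ n → ∀ α : E → Equiv.Perm (Fin n), X.IsCochain α →
    X.DefCocyc α ≤ ρ (X.localDefect α)

end PolyComplex

/-- A rate function: nondecreasing on `[0,∞)`, nonnegative there, tending to `0` at `0`. -/
def IsRateFunction (ρ : ℝ → ℝ) : Prop :=
  MonotoneOn ρ (Set.Ici 0) ∧ (∀ x, 0 ≤ x → 0 ≤ ρ x) ∧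
    Filter.Tendsto ρ (nhdsWithin 0 (Set.Ici 0)) (nhds 0)

/-! ## Coverings -/

/-- A combinatorial map between graphs. -/
structure GraphHom {V₁ E₁ V₂ E₂ : Type} (G : BSGraph V₁ E₁) (H : BSGraph V₂ E₂) where
  fV : V₁ → V₂
  fE : E₁ → E₂
  map_ι : ∀ e, H.ι (fE e) = fV (G.ι e)
  map_τ : ∀ e, H.τ (fE e) = fV (G.τ e)
  map_bar : ∀ e, fE (G.bar e) = H.bar (fE e)

/-- A covering: local bijectivity of stars. -/
def IsCovering {V₁ E₁ V₂ E₂ : Type} {G : BSGraph V₁ E₁} {H : BSGraph V₂ E₂}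
    (f : GraphHom G H) : Prop :=
  ∀ y : V₁, Set.BijOn f.fE {e | G.τ e = y} {e' | H.τ e' = f.fV y}

/-- The lift of the path `p` at the vertex `v` is closed. -/
def liftClosedAt {V₁ E₁ V₂ E₂ : Type} {G : BSGraph V₁ E₁} {H : BSGraph V₂ E₂}
    (f : GraphHom G H) (p : List E₂) (v : V₁) : Prop :=
  ∃ q : List E₁, G.IsPath q ∧ q.map f.fE = p ∧
    G.pathStart q = some v ∧ G.pathEnd q = some v

/-- A finite `H`-labeled graph. -/
structure FinLabeledGraph {V₂ E₂ : Type} (H : BSGraph V₂ E₂) where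
  V : Type
  E : Type
  fintypeV : Fintype V
  fintypeE : Fintype E
  G : BSGraph V E
  lab : GraphHom G H

namespace FinLabeledGraph

variable {V₂ E₂ : Type} {H : BSGraph V₂ E₂}

/-- An embedding of labeled graphs. -/
def Embeds (A B : FinLabeledGraph H) : Prop :=
  ∃ g : GraphHom A.G B.G, Function.Injective g.fV ∧ Function.Injective g.fE ∧
    (∀ v, B.lab.fV (g.fV v) = A.lab.fV v) ∧ (∀ e, B.lab.fE (g.fE e) = A.lab.fE e)

/-- An isomorphism of labeled graphs. -/
def LabIso (A B : FinLabeledGraph H) : Prop :=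
  ∃ g : GraphHom A.G B.G, Function.Bijective g.fV ∧ Function.Bijective g.fE ∧
    (∀ v, B.lab.fV (g.fV v) = A.lab.fV v) ∧ (∀ e, B.lab.fE (g.fE e) = A.lab.fE e)

/-- The number of unoriented edges of a finite labeled graph. -/
def unorientedEdgeCount (A : FinLabeledGraph H) : ℕ :=
  letI := A.fintypeE
  (Finset.univ.image fun e : A.E => ({e, A.G.bar e} : Finset A.E)).card

/-- The largest number of unoriented edges of a common labeled subgraph. -/
def maxCommonEdges (B C : FinLabeledGraph H) : ℕ :=
  sSup { m : ℕ | ∃ A : FinLabeledGraph H, A.Embeds B ∧ A.Embeds C ∧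
    m = A.unorientedEdgeCount }

/-- Normalized edit distance between finite labeled graphs. -/
def editDist (B C : FinLabeledGraph H) : ℝ :=
  1 - (maxCommonEdges B C : ℝ) / (max B.unorientedEdgeCount C.unorientedEdgeCount : ℕ)

end FinLabeledGraph

namespace PolyComplex

variable (X : PolyComplex V E)

/-- A genuine covering of the polygonal complex `X`: a covering of the underlying graph all of
whose lifts of polygons are closed. -/
def GenuineCovering (Z : FinLabeledGraph X.toBSGraph) : Prop :=
  IsCovering Z.lab ∧ ∀ p ∈ X.P, ∀ v : Z.V,
    X.toBSGraph.pathStart p = some (Z.lab.fV v) → liftClosedAt Z.lab p v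

/-- The local defect of a covering: the probability that a uniformly random lift of a uniformly
random polygon is open. -/
def defCover (Y : FinLabeledGraph X.toBSGraph) : ℝ :=
  letI := Y.fintypeV
  eavg X.polygonOrbits fun O => eavg O fun p =>
    eavg (Finset.univ.filter fun v : Y.V => X.toBSGraph.pathStart p = some (Y.lab.fV v))
      fun v => if liftClosedAt Y.lab p v then 0 else 1

/-- The global defect of a covering: its edit distance to the nearest genuine covering of `X`. -/
def DefCover (Y : FinLabeledGraph X.toBSGraph) : ℝ :=
  sInf { d : ℝ | ∃ Z : FinLabeledGraph X.toBSGraph, X.GenuineCovering Z ∧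
    d = Y.editDist Z }

/-- `ρ`-covering stability of the polygonal complex `X`. -/
def CoveringStable (ρ : ℝ → ℝ) : Prop :=
  ∀ Y : FinLabeledGraph X.toBSGraph, IsCovering Y.lab →
    X.DefCover Y ≤ ρ (X.defCover Y)

end PolyComplex

end StabilityPaper

namespace StabilityPaper

variable {V E : Type} [Fintype V] [Fintype E] [DecidableEq V] [DecidableEq E]

/-- The occurrence number `OC(e ≺ π)` of the unoriented edge `[e]` in the path `π`. -/
def occCount (X : PolyComplex V E) (e : E) (p : List E) : ℕ :=
  p.count e + p.count (X.bar e)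

/-- The weight `w([e]) = E_{[π]∼μ₂}[OC(e ≺ π)]` of an unoriented edge, computed using the
representatives `rep`/`erep` of the orbits. -/
def edgeWeight (X : PolyComplex V E) (μ₂ : Finset (List E) → ℝ)
    (rep : Finset (List E) → List E) (erep : Finset E → E) (Oe : Finset E) : ℝ :=
  ∑ O ∈ X.polygonOrbits, μ₂ O * (occCount X (erep Oe) (rep O) : ℝ)

/-- The induced probability `μ₁([e]) = w([e]) / Σ_{[e']} w([e'])` on unoriented edges. -/
def mu1 (X : PolyComplex V E) (μ₂ : Finset (List E) → ℝ)
    (rep : Finset (List E) → List E) (erep : Finset E → E) (Oe : Finset E) : ℝ :=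
  edgeWeight X μ₂ rep erep Oe / ∑ Oe' ∈ X.edgeOrbits, edgeWeight X μ₂ rep erep Oe'


/-! ### Auxiliary lemmas for Claim 7.1 -/

section Aux

variable {n N : ℕ}

/-- The number of agreements between `σ` and `τ` (whose complement defines `dH`). -/
def goodCount (h : n ≤ N) (σ : Equiv.Perm (Fin n)) (τ : Equiv.Perm (Fin N)) : ℕ :=
  (Finset.univ.filter fun i : Fin n =>
    ((σ i : ℕ) = ((τ (Fin.castLE h i) : Fin N) : ℕ))).card

def badCount (h : n ≤ N) (σ : Equiv.Perm (Fin n)) (τ : Equiv.Perm (Fin N)) : ℕ :=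
  (Finset.univ.filter fun i : Fin n =>
    ¬((σ i : ℕ) = ((τ (Fin.castLE h i) : Fin N) : ℕ))).card

lemma dH_eq (h : n ≤ N) (σ : Equiv.Perm (Fin n)) (τ : Equiv.Perm (Fin N)) :
    dH h σ τ = 1 - (goodCount h σ τ : ℝ) / N := rfl

lemma good_add_bad (h : n ≤ N) (σ : Equiv.Perm (Fin n)) (τ : Equiv.Perm (Fin N)) :
    goodCount h σ τ + badCount h σ τ = n := by
  unfold goodCount badCount
  rw [Finset.card_filter_add_card_filter_not]
  simp

lemma goodCount_le (h : n ≤ N) (σ : Equiv.Perm (Fin n)) (τ : Equiv.Perm (Fin N)) :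
    goodCount h σ τ ≤ n := le_trans (Finset.card_filter_le _ _) (by simp)

lemma dH_nonneg (h : n ≤ N) (σ : Equiv.Perm (Fin n)) (τ : Equiv.Perm (Fin N)) :
    0 ≤ dH h σ τ := by
  rw [dH_eq]
  have : (goodCount h σ τ : ℝ) / N ≤ 1 :=
    div_le_one_of_le₀ (by exact_mod_cast (goodCount_le h σ τ).trans h) (Nat.cast_nonneg _)
  linarith

lemma goodCount_inv (h : n ≤ N) (σ : Equiv.Perm (Fin n)) (τ : Equiv.Perm (Fin N)) :
    goodCount h σ τ = goodCount h σ⁻¹ τ⁻¹ := by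
  unfold goodCount
  apply Finset.card_bij (fun a _ => σ a)
  · intro a ha
    simp only [Finset.mem_filter, Finset.mem_univ, true_and] at ha ⊢
    have hc : Fin.castLE h (σ a) = τ (Fin.castLE h a) := by
      apply Fin.ext; simpa using ha
    rw [show σ⁻¹ (σ a) = a from σ.symm_apply_apply a, hc,
      show τ⁻¹ (τ (Fin.castLE h a)) = Fin.castLE h a from τ.symm_apply_apply _]
    simp
  · intro a _ b _ hab
    exact σ.injective hab
  · intro b hb
    simp only [Finset.mem_filter, Finset.mem_univ, true_and] at hb
    refine ⟨σ⁻¹ b, ?_, by simp⟩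
    simp only [Finset.mem_filter, Finset.mem_univ, true_and]
    have hc : Fin.castLE h (σ⁻¹ b) = τ⁻¹ (Fin.castLE h b) := by
      apply Fin.ext; simpa using hb
    rw [show σ (σ⁻¹ b) = b from σ.apply_symm_apply b, hc,
      show τ (τ⁻¹ (Fin.castLE h b)) = Fin.castLE h b from τ.apply_symm_apply _]
    simp

lemma badCount_mul (h : n ≤ N) (σ₁ σ₂ : Equiv.Perm (Fin n)) (τ₁ τ₂ : Equiv.Perm (Fin N)) :
    badCount h (σ₁ * σ₂) (τ₁ * τ₂) ≤ badCount h σ₁ τ₁ + badCount h σ₂ τ₂ := by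
  unfold badCount
  set B1 := Finset.univ.filter fun i : Fin n =>
    ¬((σ₁ i : ℕ) = ((τ₁ (Fin.castLE h i) : Fin N) : ℕ)) with hB1
  set B2 := Finset.univ.filter fun i : Fin n =>
    ¬((σ₂ i : ℕ) = ((τ₂ (Fin.castLE h i) : Fin N) : ℕ)) with hB2
  have hsub : (Finset.univ.filter fun i : Fin n =>
      ¬(((σ₁ * σ₂) i : ℕ) = ((τ₁ * τ₂) (Fin.castLE h i) : ℕ))) ⊆
      B2 ∪ B1.image (fun j => σ₂⁻¹ j) := by
    intro i hi
    simp only [Finset.mem_filter, Finset.mem_univ, true_and, Equiv.Perm.mul_apply] at hi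
    by_cases h2 : (σ₂ i : ℕ) = ((τ₂ (Fin.castLE h i) : Fin N) : ℕ)
    · apply Finset.mem_union_right
      refine Finset.mem_image.2 ⟨σ₂ i, ?_, by simp⟩
      simp only [hB1, Finset.mem_filter, Finset.mem_univ, true_and]
      have hc : Fin.castLE h (σ₂ i) = τ₂ (Fin.castLE h i) := by apply Fin.ext; simpa using h2
      rw [hc]
      exact (Finset.mem_filter.1 hi).2
    · apply Finset.mem_union_left
      simp only [hB2, Finset.mem_filter, Finset.mem_univ, true_and]
      exact h2
  calc _ ≤ (B2 ∪ B1.image (fun j => σ₂⁻¹ j)).card := Finset.card_le_card hsub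
    _ ≤ B2.card + (B1.image (fun j => σ₂⁻¹ j)).card := Finset.card_union_le _ _
    _ ≤ B1.card + B2.card := by
        rw [add_comm]
        exact add_le_add_left (Finset.card_image_le (s := B1) (f := fun j => σ₂⁻¹ j)) _

lemma dH_mul (h : n ≤ N) (σ₁ σ₂ : Equiv.Perm (Fin n)) (τ₁ τ₂ : Equiv.Perm (Fin N)) :
    dH h (σ₁ * σ₂) (τ₁ * τ₂) ≤ dH h σ₁ τ₁ + dH h σ₂ τ₂ := by
  rcases Nat.eq_zero_or_pos N with hN | hN
  · have hz : ∀ (σ : Equiv.Perm (Fin n)) (τ : Equiv.Perm (Fin N)),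
        goodCount h σ τ = 0 := fun σ τ =>
      Nat.le_zero.mp (le_trans ((goodCount_le h σ τ).trans h) hN.le)
    simp [dH_eq, hz]
  · have key : (goodCount h σ₁ τ₁ : ℝ) + goodCount h σ₂ τ₂ ≤
        goodCount h (σ₁ * σ₂) (τ₁ * τ₂) + n := by
      have b := badCount_mul h σ₁ σ₂ τ₁ τ₂
      have g1 := good_add_bad h σ₁ τ₁
      have g2 := good_add_bad h σ₂ τ₂
      have g := good_add_bad h (σ₁ * σ₂) (τ₁ * τ₂)
      have : goodCount h σ₁ τ₁ + goodCount h σ₂ τ₂ ≤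
          goodCount h (σ₁ * σ₂) (τ₁ * τ₂) + n := by omega
      exact_mod_cast this
    have hN' : (0:ℝ) < N := by exact_mod_cast hN
    have hn : (n:ℝ) / N ≤ 1 := by
      rw [div_le_one hN']; exact_mod_cast h
    rw [dH_eq, dH_eq, dH_eq]
    have h1 : ((goodCount h σ₁ τ₁ : ℝ) + goodCount h σ₂ τ₂) / N ≤
        ((goodCount h (σ₁ * σ₂) (τ₁ * τ₂) : ℝ) + n) / N := by gcongr
    rw [add_div, add_div] at h1
    linarith

lemma dH_path_le (h : n ≤ N) (α : E → Equiv.Perm (Fin n)) (φ : E → Equiv.Perm (Fin N))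
    (p : List E) (hp : p ≠ []) :
    dH h (evalPath α p) (evalPath φ p) ≤ (p.map fun e => dH h (α e) (φ e)).sum := by
  induction p with
  | nil => exact absurd rfl hp
  | cons e q ih =>
    cases q with
    | nil => simp [evalPath]
    | cons f r =>
      have h1 : evalPath α (e :: f :: r) = α e * evalPath α (f :: r) := by
        simp [evalPath]
      have h2 : evalPath φ (e :: f :: r) = φ e * evalPath φ (f :: r) := by
        simp [evalPath]
      rw [h1, h2, List.map_cons, List.sum_cons]
      calc dH h (α e * evalPath α (f :: r)) (φ e * evalPath φ (f :: r)) ≤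
          dH h (α e) (φ e) + dH h (evalPath α (f :: r)) (evalPath φ (f :: r)) :=
            dH_mul h _ _ _ _
        _ ≤ _ := add_le_add_right (ih (by simp)) _

lemma orbitPair_eq (X : PolyComplex V E) {e₀ a : E}
    (ha : a ∈ ({e₀, X.bar e₀} : Finset E)) :
    ({a, X.bar a} : Finset E) = {e₀, X.bar e₀} := by
  rcases Finset.mem_insert.1 ha with rfl | ha
  · rfl
  · rw [Finset.mem_singleton.1 ha, X.bar_invol, Finset.pair_comm]

lemma sum_count_orbits (X : PolyComplex V E) (erep : Finset E → E)
    (herep : ∀ O ∈ X.edgeOrbits, erep O ∈ O)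
    (f : E → ℝ) (hf : ∀ e, f (X.bar e) = f e) (p : List E) :
    (p.map f).sum = ∑ Oe ∈ X.edgeOrbits, (occCount X (erep Oe) p : ℝ) * f (erep Oe) := by
  have step1 : (p.map f).sum = ∑ a : E, (p.count a : ℝ) * f a := by
    rw [Finset.sum_list_map_count]
    rw [Finset.sum_subset (Finset.subset_univ p.toFinset)]
    · apply Finset.sum_congr rfl
      intro a _
      rw [nsmul_eq_mul]
    · intro a _ ha
      rw [List.count_eq_zero_of_not_mem (by simpa using ha)]
      simp
  rw [step1]
  rw [← Finset.sum_fiberwise_of_maps_to (g := fun a => ({a, X.bar a} : Finset E))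
      (t := X.edgeOrbits) (fun a _ => Finset.mem_image.2 ⟨a, Finset.mem_univ a, rfl⟩)]
  apply Finset.sum_congr rfl
  intro Oe hOe
  obtain ⟨e₀, -, rfl⟩ := Finset.mem_image.1 hOe
  have hfib : (Finset.univ.filter fun a => ({a, X.bar a} : Finset E) = {e₀, X.bar e₀})
      = ({e₀, X.bar e₀} : Finset E) := by
    ext a
    simp only [Finset.mem_filter, Finset.mem_univ, true_and]
    constructor
    · intro hEq; rw [← hEq]; exact Finset.mem_insert_self a _
    · exact orbitPair_eq X
  rw [hfib]
  have he : erep ({e₀, X.bar e₀} : Finset E) ∈ ({e₀, X.bar e₀} : Finset E) := herep _ hOe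
  set e := erep ({e₀, X.bar e₀} : Finset E) with he_def
  have hpair : ({e, X.bar e} : Finset E) = {e₀, X.bar e₀} := orbitPair_eq X he
  rw [← hpair, Finset.sum_pair (Ne.symm (X.bar_ne e)), hf e]
  show (p.count e : ℝ) * f e + (p.count (X.bar e) : ℝ) * f e
      = ((p.count e + p.count (X.bar e) : ℕ) : ℝ) * f e
  push_cast
  ring

end Aux

/-- **Claim 7.1 (weighting-system perturbation).** For a probability distribution `μ₂` on the
unoriented polygons, the induced distribution `μ₁` on unoriented edges satisfies
`E_{[π]∼μ₂}[d_h(δα(π), δφ(π))] ≤ E_{[π]∼μ₂}[ℓ(π)] · E_{[e]∼μ₁}[d_h(α(e), φ(e))]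
≤ L · E_{[e]∼μ₁}[d_h(α(e), φ(e))]`, where `L` bounds the lengths of the polygons. -/
theorem weighting_system_perturbation
    (X : PolyComplex V E)
    (μ₂ : Finset (List E) → ℝ)
    (hμ₂0 : ∀ O ∈ X.polygonOrbits, 0 ≤ μ₂ O)
    (hμ₂1 : ∑ O ∈ X.polygonOrbits, μ₂ O = 1)
    (L : ℕ) (hL : ∀ p ∈ X.P, p.length ≤ L)
    (rep : Finset (List E) → List E) (hrep : ∀ O ∈ X.polygonOrbits, rep O ∈ O)
    (erep : Finset E → E) (herep : ∀ O ∈ X.edgeOrbits, erep O ∈ O)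
    {n N : ℕ} (h : n ≤ N)
    (α : E → Equiv.Perm (Fin n)) (hα : X.IsCochain α)
    (φ : E → Equiv.Perm (Fin N)) (hφ : X.IsCochain φ) :
    (∑ O ∈ X.polygonOrbits, μ₂ O * dH h (evalPath α (rep O)) (evalPath φ (rep O))) ≤
      (∑ O ∈ X.polygonOrbits, μ₂ O * ((rep O).length : ℝ)) *
        (∑ Oe ∈ X.edgeOrbits, mu1 X μ₂ rep erep Oe * dH h (α (erep Oe)) (φ (erep Oe))) ∧
    (∑ O ∈ X.polygonOrbits, μ₂ O * ((rep O).length : ℝ)) *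
        (∑ Oe ∈ X.edgeOrbits, mu1 X μ₂ rep erep Oe * dH h (α (erep Oe)) (φ (erep Oe))) ≤
      (L : ℝ) *
        (∑ Oe ∈ X.edgeOrbits, mu1 X μ₂ rep erep Oe * dH h (α (erep Oe)) (φ (erep Oe))) := by
  classical
  -- abbreviations
  have hf_bar : ∀ e, dH h (α (X.bar e)) (φ (X.bar e)) = dH h (α e) (φ e) := by
    intro e
    rw [hα e, hφ e, dH_eq, dH_eq, ← goodCount_inv]
  have hrepP : ∀ O ∈ X.polygonOrbits, rep O ∈ X.P := by
    intro O hO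
    have hmem := hrep O hO
    obtain ⟨p, hp, rfl⟩ := Finset.mem_image.1 hO
    exact (Finset.mem_filter.1 hmem).1
  have hne : ∀ O ∈ X.polygonOrbits, rep O ≠ [] :=
    fun O hO => (X.P_closed _ (hrepP O hO)).1
  have hlen : ∀ O ∈ X.polygonOrbits, (rep O).length ≤ L :=
    fun O hO => hL _ (hrepP O hO)
  have hB : ∀ O, ((rep O).length : ℝ)
      = ∑ Oe ∈ X.edgeOrbits, (occCount X (erep Oe) (rep O) : ℝ) := by
    intro O
    have h1 := sum_count_orbits X erep herep (fun _ => (1:ℝ)) (fun _ => rfl) (rep O)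
    simpa using h1
  set W := ∑ Oe' ∈ X.edgeOrbits, edgeWeight X μ₂ rep erep Oe' with hW_def
  have hWL : W = ∑ O ∈ X.polygonOrbits, μ₂ O * ((rep O).length : ℝ) := by
    rw [hW_def]
    unfold edgeWeight
    rw [Finset.sum_comm]
    apply Finset.sum_congr rfl
    intro O _
    rw [← Finset.mul_sum, ← hB O]
  have hW1 : (1:ℝ) ≤ W := by
    rw [hWL, ← hμ₂1]
    apply Finset.sum_le_sum
    intro O hO
    have h1 : (1:ℝ) ≤ ((rep O).length : ℝ) := by
      exact_mod_cast List.length_pos_iff.2 (hne O hO)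
    nlinarith [hμ₂0 O hO]
  have hWne : W ≠ 0 := by linarith
  have hW0 : (0:ℝ) ≤ W := by linarith
  -- the key upper bound
  have key : (∑ O ∈ X.polygonOrbits, μ₂ O * dH h (evalPath α (rep O)) (evalPath φ (rep O)))
      ≤ ∑ Oe ∈ X.edgeOrbits,
          edgeWeight X μ₂ rep erep Oe * dH h (α (erep Oe)) (φ (erep Oe)) := by
    have step : ∀ O ∈ X.polygonOrbits,
        μ₂ O * dH h (evalPath α (rep O)) (evalPath φ (rep O)) ≤
        μ₂ O * ∑ Oe ∈ X.edgeOrbits,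
          (occCount X (erep Oe) (rep O) : ℝ) * dH h (α (erep Oe)) (φ (erep Oe)) := by
      intro O hO
      apply mul_le_mul_of_nonneg_left _ (hμ₂0 O hO)
      have h2 : ((rep O).map fun e => dH h (α e) (φ e)).sum
          = ∑ Oe ∈ X.edgeOrbits,
            (occCount X (erep Oe) (rep O) : ℝ) * dH h (α (erep Oe)) (φ (erep Oe)) :=
        sum_count_orbits X erep herep _ hf_bar (rep O)
      rw [← h2]
      exact dH_path_le h α φ (rep O) (hne O hO)
    calc _ ≤ ∑ O ∈ X.polygonOrbits, μ₂ O * ∑ Oe ∈ X.edgeOrbits,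
            (occCount X (erep Oe) (rep O) : ℝ) * dH h (α (erep Oe)) (φ (erep Oe)) :=
          Finset.sum_le_sum step
      _ = _ := by
          simp_rw [Finset.mul_sum]
          rw [Finset.sum_comm]
          apply Finset.sum_congr rfl
          intro Oe _
          unfold edgeWeight
          rw [Finset.sum_mul]
          apply Finset.sum_congr rfl
          intro O _
          ring
  -- the middle expression equals the key RHS
  have hRHS : (∑ O ∈ X.polygonOrbits, μ₂ O * ((rep O).length : ℝ)) *
      (∑ Oe ∈ X.edgeOrbits, mu1 X μ₂ rep erep Oe * dH h (α (erep Oe)) (φ (erep Oe))) =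
      ∑ Oe ∈ X.edgeOrbits,
        edgeWeight X μ₂ rep erep Oe * dH h (α (erep Oe)) (φ (erep Oe)) := by
    rw [← hWL]
    unfold mu1
    rw [← hW_def]
    simp_rw [div_mul_eq_mul_div]
    rw [← Finset.sum_div, mul_div_cancel₀ _ hWne]
  have hS0 : (0:ℝ) ≤
      ∑ Oe ∈ X.edgeOrbits, mu1 X μ₂ rep erep Oe * dH h (α (erep Oe)) (φ (erep Oe)) := by
    apply Finset.sum_nonneg
    intro Oe _
    apply mul_nonneg _ (dH_nonneg h _ _)
    unfold mu1
    rw [← hW_def]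
    apply div_nonneg _ hW0
    apply Finset.sum_nonneg
    intro O hO
    exact mul_nonneg (hμ₂0 O hO) (Nat.cast_nonneg _)
  constructor
  · rw [hRHS]
    exact key
  · apply mul_le_mul_of_nonneg_right _ hS0
    rw [← mul_one (L:ℝ), ← hμ₂1, Finset.mul_sum]
    apply Finset.sum_le_sum
    intro O hO
    have h1 : ((rep O).length : ℝ) ≤ L := by exact_mod_cast hlen O hO
    nlinarith [hμ₂0 O hO]

end StabilityPaper
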